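/- Let ≿ be a monotonic and continuous preference relation on X. Then ≿ exhibits preference for naive diversification if and only if ≿ is convex and permutation invariant. -/

import Mathlib

open Finset Matrix MeasureTheory

/-- Sum of the `k` largest components of a vector in `ℝⁿ`. -/
noncomputable def topSum {n : ℕ} (a : Fin n → ℝ) (k : ℕ) : ℝ :=
  sSup {t : ℝ | ∃ s : Finset (Fin n), s.card = k ∧ t = ∑ i ∈ s, a i}

/-- `Majorizes b a` means `b` majorizes `a`, i.e. `a ≤_m b`. -/
def Majorizes {n : ℕ} (b a : Fin n → ℝ) : Prop :=
  (∑ i, a i = ∑ i, b i) ∧ ∀ k : ℕ, 1 ≤ k → k ≤ n - 1 → topSum a k ≤ topSum b k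

/-- Preference for naive diversification. -/
def PrefNaiveDiv {X : Type*} [AddCommGroup X] [Module ℝ X] (pref : X → X → Prop) : Prop :=
  ∀ (n : ℕ) (a b : Fin n → ℝ), a ∈ stdSimplex ℝ (Fin n) → b ∈ stdSimplex ℝ (Fin n) →
    Majorizes b a → ∀ x : Fin n → X, pref (∑ i, a i • x i) (∑ i, b i • x i)

/-- A permutation matrix. -/
def IsPermMatrix {n : ℕ} (P : Matrix (Fin n) (Fin n) ℝ) : Prop :=
  ∃ σ : Equiv.Perm (Fin n), ∀ i j, P i j = if σ i = j then 1 else 0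

/-- A convex preference relation: `x ≿ y` implies `t x + (1-t) y ≿ y` for `t ∈ (0,1)`. -/
def ConvexPref {X : Type*} [AddCommGroup X] [Module ℝ X] (pref : X → X → Prop) : Prop :=
  ∀ x y : X, pref x y → ∀ t : ℝ, 0 < t → t < 1 → pref (t • x + (1 - t) • y) y

/-- A permutation invariant preference relation. -/
def PermInvariant {X : Type*} [AddCommGroup X] [Module ℝ X] (pref : X → X → Prop) : Prop :=
  ∀ (n : ℕ) (a : Fin n → ℝ), a ∈ stdSimplex ℝ (Fin n) →
    ∀ P : Matrix (Fin n) (Fin n) ℝ, IsPermMatrix P → ∀ x : Fin n → X,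
      pref (∑ i, a i • x i) (∑ i, (a ᵥ* P) i • x i) ∧
        pref (∑ i, (a ᵥ* P) i • x i) (∑ i, a i • x i)

/-!
Naive diversification with `n = 2`, `a = (t, 1 - t)`, `b = (1, 0)` is convexity, and with `a`, `b`
rearrangements of each other it is permutation invariance. Conversely, for a convex preference
the set of weights `c` with `∑ cᵢ xᵢ ≿ ∑ bᵢ xᵢ` is convex, and permutation invariance puts every
rearrangement of `b` in it; so it contains every `a ≤_m b` by Rado's theorem: `a` lies in the
convex hull of the rearrangements of `b`. Rado's theorem follows by separation: for weights `w`,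
list `w` and `b` in decreasing order; the partial sums of `a` in the order of `w` are at most
`topSum a k ≤ topSum b k`, the partial sums of the sorted `b`, and summation by parts gives
`∑ aᵢ wᵢ ≤ ∑ b_{σ i} wᵢ` for the permutation `σ` matching the two orders.
-/

open Equiv

lemma sum_range_mul_le_of_sum_range_le {n : ℕ} {a b w : ℕ → ℝ}
    (hw : ∀ i, i + 1 < n → w (i + 1) ≤ w i)
    (hab : ∀ k < n, ∑ i ∈ range k, a i ≤ ∑ i ∈ range k, b i)
    (hsum : ∑ i ∈ range n, a i = ∑ i ∈ range n, b i) :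
    ∑ i ∈ range n, a i * w i ≤ ∑ i ∈ range n, b i * w i := by
  have hparts : ∑ i ∈ range n, (b i - a i) * w i = -∑ i ∈ range (n - 1),
      (w (i + 1) - w i) * ∑ j ∈ range (i + 1), (b j - a j) := by
    simpa [smul_eq_mul, mul_comm, sum_sub_distrib, hsum]
      using sum_range_by_parts w (fun i => b i - a i) n
  rw [← sub_nonneg, ← sum_sub_distrib]
  simp only [← sub_mul, hparts, neg_nonneg]
  refine sum_nonpos fun i hi => mul_nonpos_of_nonpos_of_nonneg ?_ ?_
  · linarith [hw i (by rw [mem_range] at hi; omega)]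
  · rw [sum_sub_distrib, sub_nonneg]
    exact hab (i + 1) (by rw [mem_range] at hi; omega)

lemma sum_mul_le_sum_mul_of_sum_castLE_le {n : ℕ} {a b w : Fin n → ℝ} (hw : Antitone w)
    (hab : ∀ k (hk : k < n),
      ∑ m : Fin k, a (Fin.castLE hk.le m) ≤ ∑ m : Fin k, b (Fin.castLE hk.le m))
    (hsum : ∑ i, a i = ∑ i, b i) :
    ∑ i, a i * w i ≤ ∑ i, b i * w i := by
  let ext (c : Fin n → ℝ) : ℕ → ℝ := Function.extend Fin.val c 0
  have hext (c : Fin n → ℝ) (i : Fin n) : ext c i = c i := Fin.val_injective.extend_apply c 0 i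
  have hprefix (c : Fin n → ℝ) (k : ℕ) (hk : k ≤ n) :
      ∑ i ∈ range k, ext c i = ∑ m : Fin k, c (Fin.castLE hk m) := by
    rw [← Fin.sum_univ_eq_sum_range]
    exact sum_congr rfl fun m _ => hext c (Fin.castLE hk m)
  have key := sum_range_mul_le_of_sum_range_le (n := n) (a := ext a) (b := ext b) (w := ext w)
    (fun i hi => (hext w ⟨i + 1, hi⟩).trans_le <|
      (hw (Fin.mk_le_mk.2 i.le_succ)).trans_eq (hext w ⟨i, by omega⟩).symm)
    (fun k hk => by rw [hprefix a k hk.le, hprefix b k hk.le]; exact hab k hk)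
    (by simpa only [← Fin.sum_univ_eq_sum_range, hext] using hsum)
  simpa only [← Fin.sum_univ_eq_sum_range, hext] using key

lemma Fin.val_le_of_strictMono {k n : ℕ} {e : Fin k → Fin n} (he : StrictMono e) (m : Fin k) :
    (m : ℕ) ≤ e m := by
  obtain ⟨m, hm⟩ := m
  induction m with
  | zero => exact Nat.zero_le _
  | succ m ih =>
    exact (ih (by omega)).trans_lt (he (Fin.mk_lt_mk.2 m.lt_succ_self))

lemma exists_perm_antitone_comp {n : ℕ} (w : Fin n → ℝ) : ∃ σ : Perm (Fin n), Antitone (w ∘ σ) :=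
  ⟨Tuple.sort (OrderDual.toDual ∘ w), monotone_toDual_comp_iff.1 (Tuple.monotone_sort _)⟩

section topSum

variable {n k : ℕ}

lemma bddAbove_sums_card_eq (a : Fin n → ℝ) (k : ℕ) :
    BddAbove {t : ℝ | ∃ s : Finset (Fin n), s.card = k ∧ t = ∑ i ∈ s, a i} :=
  ((Set.finite_range fun s : Finset (Fin n) => ∑ i ∈ s, a i).subset
    (by rintro _ ⟨s, -, rfl⟩; exact ⟨s, rfl⟩)).bddAbove

lemma sum_le_topSum (a : Fin n → ℝ) {s : Finset (Fin n)} (hs : s.card = k) :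
    ∑ i ∈ s, a i ≤ topSum a k :=
  le_csSup (bddAbove_sums_card_eq a k) ⟨s, hs, rfl⟩

lemma topSum_le {a : Fin n → ℝ} (hk : k ≤ n) {M : ℝ}
    (h : ∀ s : Finset (Fin n), s.card = k → ∑ i ∈ s, a i ≤ M) : topSum a k ≤ M := by
  obtain ⟨s, -, hs⟩ := exists_subset_card_eq (s := (univ : Finset (Fin n))) (by simpa using hk)
  exact csSup_le ⟨_, s, hs, rfl⟩ (by rintro _ ⟨s, hs, rfl⟩; exact h s hs)

lemma sum_comp_le_topSum (a : Fin n → ℝ) (e : Fin k ↪ Fin n) : ∑ m, a (e m) ≤ topSum a k := by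
  simpa using sum_le_topSum a (s := univ.map e) (by simp)

lemma topSum_comp_perm (a : Fin n → ℝ) (σ : Perm (Fin n)) (k : ℕ) :
    topSum (a ∘ σ) k = topSum a k := by
  unfold topSum
  congr 1
  ext t
  constructor
  · rintro ⟨s, hs, rfl⟩
    exact ⟨s.map σ.toEmbedding, by simpa using hs, by simp⟩
  · rintro ⟨s, hs, rfl⟩
    exact ⟨s.map σ.symm.toEmbedding, by simpa using hs, by simp⟩

lemma topSum_le_sum_castLE {a : Fin n → ℝ} (ha : Antitone a) (hk : k ≤ n) :
    topSum a k ≤ ∑ m : Fin k, a (Fin.castLE hk m) := by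
  refine topSum_le hk fun s hs => ?_
  rw [← map_orderEmbOfFin_univ s hs, sum_map]
  exact sum_le_sum fun m _ => ha <|
    Fin.le_iff_val_le_val.2 (Fin.val_le_of_strictMono (s.orderEmbOfFin hs).strictMono m)

end topSum

namespace Majorizes

variable {n : ℕ} {a b : Fin n → ℝ}

lemma comp_perm_left (a : Fin n → ℝ) (σ : Perm (Fin n)) : Majorizes (a ∘ σ) a :=
  ⟨(Equiv.sum_comp σ a).symm, fun k _ _ => (topSum_comp_perm a σ k).ge⟩

lemma comp_perm_right (a : Fin n → ℝ) (σ : Perm (Fin n)) : Majorizes a (a ∘ σ) := by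
  simpa [Function.comp_assoc] using comp_perm_left (a ∘ σ) σ.symm

lemma single_of_mem_stdSimplex (ha : a ∈ stdSimplex ℝ (Fin n)) (j : Fin n) :
    Majorizes (Pi.single j 1) a := by
  refine ⟨by simp [ha.2], fun k hk1 hkn => ?_⟩
  have hk : k ≤ n := hkn.trans (Nat.sub_le n 1)
  obtain ⟨s, hjs, -, hs⟩ := exists_subsuperset_card_eq (subset_univ {j}) (by simpa using hk1)
    (by simpa using hk)
  calc topSum a k ≤ 1 := topSum_le hk fun s _ =>
        ha.2 ▸ sum_le_univ_sum_of_nonneg fun i => ha.1 i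
    _ = ∑ i ∈ s, (Pi.single j 1 : Fin n → ℝ) i := by simp [hjs (mem_singleton_self j)]
    _ ≤ topSum (Pi.single j 1) k := sum_le_topSum _ hs

lemma exists_perm_sum_mul_le (h : Majorizes b a) (w : Fin n → ℝ) :
    ∃ σ : Perm (Fin n), ∑ i, a i * w i ≤ ∑ i, b (σ i) * w i := by
  obtain ⟨ρ, hρ⟩ := exists_perm_antitone_comp w
  obtain ⟨β, hβ⟩ := exists_perm_antitone_comp b
  refine ⟨ρ.symm.trans β, ?_⟩
  rw [← Equiv.sum_comp ρ, ← Equiv.sum_comp ρ (fun i => b _ * w i)]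
  simp only [Equiv.trans_apply, Equiv.symm_apply_apply]
  refine sum_mul_le_sum_mul_of_sum_castLE_le (a := a ∘ ρ) (b := b ∘ β) hρ (fun k hk => ?_)
    (by simpa only [Function.comp_apply, Equiv.sum_comp] using h.1)
  rcases Nat.eq_zero_or_pos k with rfl | hk0
  · simp
  calc ∑ m : Fin k, a (ρ (Fin.castLE hk.le m))
      ≤ topSum a k := sum_comp_le_topSum a ((Fin.castLEEmb hk.le).trans ρ.toEmbedding)
    _ ≤ topSum b k := h.2 k hk0 (by omega)
    _ = topSum (b ∘ β) k := (topSum_comp_perm b β k).symm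
    _ ≤ ∑ m : Fin k, (b ∘ β) (Fin.castLE hk.le m) := topSum_le_sum_castLE hβ hk.le

theorem mem_convexHull_perm (h : Majorizes b a) :
    a ∈ convexHull ℝ (Set.range fun σ : Perm (Fin n) => b ∘ σ) := by
  classical
  by_contra ha
  obtain ⟨f, u, hfu, huf⟩ := geometric_hahn_banach_closed_point (convex_convexHull ℝ _)
    ((Set.finite_range _).isCompact_convexHull ℝ).isClosed ha
  set w : Fin n → ℝ := fun i => f fun j => if i = j then 1 else 0
  have hf (c : Fin n → ℝ) : f c = ∑ i, c i * w i := f.toLinearMap.pi_apply_eq_sum_univ c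
  obtain ⟨σ, hσ⟩ := h.exists_perm_sum_mul_le w
  have hbσ := hfu _ (subset_convexHull ℝ _ ⟨σ, rfl⟩)
  rw [hf] at hbσ huf
  exact hσ.not_gt (hbσ.trans huf)

end Majorizes

lemma isPermMatrix_iff {n : ℕ} {P : Matrix (Fin n) (Fin n) ℝ} :
    IsPermMatrix P ↔ ∃ σ : Perm (Fin n), P = σ.permMatrix ℝ := by
  simp only [IsPermMatrix, ← Matrix.ext_iff, PEquiv.toMatrix_apply, toPEquiv_apply,
    Option.mem_def, Option.some.injEq]

lemma comp_perm_mem_stdSimplex {n : ℕ} {a : Fin n → ℝ} (ha : a ∈ stdSimplex ℝ (Fin n))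
    (σ : Perm (Fin n)) : a ∘ σ ∈ stdSimplex ℝ (Fin n) :=
  ⟨fun i => ha.1 (σ i), (Equiv.sum_comp σ a).trans ha.2⟩

section Preference

variable {X : Type*} [AddCommGroup X] [Module ℝ X] {pref : X → X → Prop}

lemma ConvexPref.convex_setOf_pref (hconv : ConvexPref pref)
    (hcomplete : ∀ x y, pref x y ∨ pref y x) (htrans : ∀ x y z, pref x y → pref y z → pref x z)
    (y : X) : Convex ℝ {z | pref z y} := by
  refine convex_iff_pairwise_pos.2 fun z hz z' hz' _ s t hs ht hst => ?_
  rcases hcomplete z z' with h | h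
  · have hmix := hconv z z' h s hs (by linarith)
    rw [show 1 - s = t by linarith] at hmix
    exact htrans _ _ _ hmix hz'
  · have hmix := hconv z' z h t ht (by linarith)
    rw [show 1 - t = s by linarith, add_comm] at hmix
    exact htrans _ _ _ hmix hz

lemma PrefNaiveDiv.convexPref (hnd : PrefNaiveDiv pref)
    (htrans : ∀ x y z, pref x y → pref y z → pref x z) : ConvexPref pref := by
  intro x y hxy t ht0 ht1
  have hmem : ![t, 1 - t] ∈ stdSimplex ℝ (Fin 2) :=
    ⟨fun i => by fin_cases i <;> simp <;> linarith, by simp⟩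
  have hmix := hnd 2 _ _ hmem (single_mem_stdSimplex ℝ 0)
    (.single_of_mem_stdSimplex hmem 0) ![x, y]
  simp only [Fin.sum_univ_two, Matrix.cons_val_zero, Matrix.cons_val_one, Pi.single_eq_same,
    Pi.single_eq_of_ne (show (1 : Fin 2) ≠ 0 by decide), one_smul, zero_smul, add_zero] at hmix
  exact htrans _ _ _ hmix hxy

lemma PrefNaiveDiv.permInvariant (hnd : PrefNaiveDiv pref) : PermInvariant pref := by
  intro n a ha P hP x
  obtain ⟨σ, rfl⟩ := isPermMatrix_iff.1 hP
  rw [vecMul_permMatrix]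
  have haσ := comp_perm_mem_stdSimplex ha σ.symm
  exact ⟨hnd n a _ ha haσ (.comp_perm_left a σ.symm) x,
    hnd n _ a haσ ha (.comp_perm_right a σ.symm) x⟩

lemma ConvexPref.prefNaiveDiv (hconv : ConvexPref pref) (hperm : PermInvariant pref)
    (hcomplete : ∀ x y, pref x y ∨ pref y x) (htrans : ∀ x y z, pref x y → pref y z → pref x z) :
    PrefNaiveDiv pref := by
  intro n a b _ hb hab x
  let U : Set (Fin n → ℝ) := Fintype.linearCombination ℝ x ⁻¹' {z | pref z (∑ i, b i • x i)}
  have hU : Convex ℝ U := (hconv.convex_setOf_pref hcomplete htrans _).linear_preimage _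
  have hperms : (Set.range fun σ : Perm (Fin n) => b ∘ σ) ⊆ U := by
    rintro _ ⟨σ, rfl⟩
    have hσ := (hperm n b hb (Perm.permMatrix ℝ σ.symm) (isPermMatrix_iff.2 ⟨_, rfl⟩) x).2
    simpa [U, vecMul_permMatrix, Fintype.linearCombination_apply] using hσ
  simpa [U, Fintype.linearCombination_apply] using convexHull_min hperms hU hab.mem_convexHull_perm

end Preference

theorem naiveDiv_iff_convex_permInvariant_general
    {Ω : Type*} [MeasurableSpace Ω] (ℙ : Measure Ω)
    (pref : Lp ℝ ⊤ ℙ → Lp ℝ ⊤ ℙ → Prop)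
    (hcomplete : ∀ x y : Lp ℝ ⊤ ℙ, pref x y ∨ pref y x)
    (htrans : ∀ x y z : Lp ℝ ⊤ ℙ, pref x y → pref y z → pref x z) :
    PrefNaiveDiv pref ↔ (ConvexPref pref ∧ PermInvariant pref) :=
  ⟨fun hnd => ⟨hnd.convexPref htrans, hnd.permInvariant⟩,
    fun ⟨hconv, hperm⟩ => hconv.prefNaiveDiv hperm hcomplete htrans⟩

/-- A monotonic and continuous preference relation on `X = L^∞(Ω, F, ℙ)` exhibits
preference for naive diversification if and only if it is convex and permutation
invariant. -/
theorem naiveDiv_iff_convex_permInvariant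
    {Ω : Type*} [MeasurableSpace Ω] (ℙ : Measure Ω) [IsProbabilityMeasure ℙ]
    (pref : Lp ℝ ⊤ ℙ → Lp ℝ ⊤ ℙ → Prop)
    (hcomplete : ∀ x y : Lp ℝ ⊤ ℙ, pref x y ∨ pref y x)
    (htrans : ∀ x y z : Lp ℝ ⊤ ℙ, pref x y → pref y z → pref x z)
    (hmono : ∀ x y : Lp ℝ ⊤ ℙ, y ≤ x → pref x y)
    (hcont : ∀ x y : Lp ℝ ⊤ ℙ, pref x y → ¬ pref y x →
      ∃ U ∈ nhds x, ∃ V ∈ nhds y, ∀ x' ∈ U, ∀ y' ∈ V, pref x' y' ∧ ¬ pref y' x') :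
    PrefNaiveDiv pref ↔ (ConvexPref pref ∧ PermInvariant pref) :=
  naiveDiv_iff_convex_permInvariant_general ℙ pref hcomplete htrans
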